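/- Suppose a family of i.i.d. experiments produces outcomes with distribution p_ψ depending on a state ψ, and an estimator of spread Δ must satisfy |∑_i p_ψ(i) e(i) - Tr(Aψ)| ≤ b_max for all density matrices ψ and all Hermitian A with -I/2 ≤ A ≤ I/2. Then for any two density matrices ψ, φ: Δ = max_i e(i) - min_i e(i) ≥ (D_tr(ψ,φ) - 2 b_max) / D_TV(p_ψ, p_φ), provided D_TV(p_ψ,p_φ) > 0, where the observable-dependence of e is suppressed by taking A to achieve the trace distance. -/

import Mathlib

open Finset Matrix
open scoped ComplexOrder

/-- The trace norm of a complex matrix: the sum of its singular values,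
i.e. the square roots of the eigenvalues of `Xᴴ * X`. -/
noncomputable def traceNorm {d : ℕ} (X : Matrix (Fin d) (Fin d) ℂ) : ℝ :=
  ∑ i, Real.sqrt ((Matrix.isHermitian_conjTranspose_mul_self X).eigenvalues i)

/-- Trace distance. -/
noncomputable def traceDist {d : ℕ} (ρ σ : Matrix (Fin d) (Fin d) ℂ) : ℝ :=
  (1 / 2) * traceNorm (ρ - σ)

theorem spread_lower_bound_from_trace_distance
    {d : ℕ} {I : Type*} [Fintype I] [Nonempty I]
    (ψ φ : Matrix (Fin d) (Fin d) ℂ)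
    (hψ : ψ.PosSemidef) (hφ : φ.PosSemidef)
    (hψ1 : ψ.trace = 1) (hφ1 : φ.trace = 1) (hne : ψ ≠ φ)
    (A : Matrix (Fin d) (Fin d) ℂ) (hA : A.IsHermitian)
    (hAlo : (A + (1 / 2 : ℂ) • 1).PosSemidef)
    (hAhi : ((1 / 2 : ℂ) • 1 - A).PosSemidef)
    (hAach : (A * (ψ - φ)).trace.re = traceDist ψ φ)
    (p q : I → ℝ) (e : I → ℝ)
    (hp0 : ∀ i, 0 ≤ p i) (hq0 : ∀ i, 0 ≤ q i)
    (hp1 : ∑ i, p i = 1) (hq1 : ∑ i, q i = 1)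
    (bmax : ℝ) (hbmax : 0 ≤ bmax)
    (hpe : |∑ i, p i * e i - (A * ψ).trace.re| ≤ bmax)
    (hqe : |∑ i, q i * e i - (A * φ).trace.re| ≤ bmax)
    (hTV : 0 < (1 / 2) * ∑ i, |p i - q i|) :
    (univ.sup' univ_nonempty e - univ.inf' univ_nonempty e) *
        ((1 / 2) * ∑ i, |p i - q i|) ≥
      traceDist ψ φ - 2 * bmax := by
  set M := univ.sup' univ_nonempty e with hM
  set m := univ.inf' univ_nonempty e with hm
  have hle : ∀ i : I, e i ≤ M := fun i => le_sup' e (mem_univ i)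
  have hge : ∀ i : I, m ≤ e i := fun i => inf'_le e (mem_univ i)
  have hMm : m ≤ M := le_trans (hge (Classical.arbitrary I)) (hle _)
  have h1 : traceDist ψ φ = (A * ψ).trace.re - (A * φ).trace.re := by
    rw [← hAach, mul_sub, trace_sub, Complex.sub_re]
  have h2 : traceDist ψ φ - 2 * bmax ≤ ∑ i, p i * e i - ∑ i, q i * e i := by
    rw [h1]
    linarith [(abs_le.mp hpe).1, (abs_le.mp hpe).2, (abs_le.mp hqe).1, (abs_le.mp hqe).2]
  have hsum0 : ∑ i, (p i - q i) = 0 := by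
    rw [Finset.sum_sub_distrib, hp1, hq1]; ring
  have h3 : ∑ i, p i * e i - ∑ i, q i * e i
      = ∑ i, (p i - q i) * (e i - (M + m) / 2) := by
    have h : ∀ i ∈ univ, (p i - q i) * (e i - (M + m) / 2)
        = (p i * e i - q i * e i) - (p i - q i) * ((M + m) / 2) := by
      intros; ring
    rw [Finset.sum_congr rfl h, Finset.sum_sub_distrib, ← Finset.sum_mul, hsum0,
      Finset.sum_sub_distrib]
    ring
  have h4 : ∑ i, (p i - q i) * (e i - (M + m) / 2)
      ≤ ∑ i, |p i - q i| * ((M - m) / 2) := by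
    apply Finset.sum_le_sum
    intro i _
    calc (p i - q i) * (e i - (M + m) / 2)
        ≤ |(p i - q i) * (e i - (M + m) / 2)| := le_abs_self _
      _ = |p i - q i| * |e i - (M + m) / 2| := abs_mul _ _
      _ ≤ |p i - q i| * ((M - m) / 2) := by
          apply mul_le_mul_of_nonneg_left _ (abs_nonneg _)
          rw [abs_le]
          constructor <;> [linarith [hge i]; linarith [hle i]]
  have h5 : ∑ i, |p i - q i| * ((M - m) / 2)
      = (M - m) * ((1 / 2) * ∑ i, |p i - q i|) := by
    rw [← Finset.sum_mul]; ring
  rw [ge_iff_le]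
  calc traceDist ψ φ - 2 * bmax ≤ ∑ i, p i * e i - ∑ i, q i * e i := h2
    _ = ∑ i, (p i - q i) * (e i - (M + m) / 2) := h3
    _ ≤ ∑ i, |p i - q i| * ((M - m) / 2) := h4
    _ = (M - m) * ((1 / 2) * ∑ i, |p i - q i|) := h5
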